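/- arXiv:1808.07791 — 3 statements merged into one kernel-verified Lean document; each statement's English description precedes it below -/
import Mathlib

section
/- A non-autonomous system (X, f_{1,∞}) on a compact metric space (with surjective maps) is topologically mixing if and only if the induced system (ℳ(X), f̃_{1,∞}) on Borel probability measures with the weak* topology is topologically mixing. -/
open Metric TopologicalSpace MeasureTheory

/-- `nIter f n = f_n ∘ ⋯ ∘ f_1` (with `f (i)` playing the role of `f_{i+1}`), `nIter f 0 = id`. -/
def nIter {X : Type*} (f : ℕ → X → X) : ℕ → X → X
  | 0 => id
  | n + 1 => f n ∘ nIter f n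

/-- Strong specification property for a non-autonomous system. -/
def SSP {X : Type*} [MetricSpace X] (f : ℕ → X → X) : Prop :=
  ∀ ε : ℝ, ε > 0 → ∃ M : ℕ, ∀ k : ℕ, 1 ≤ k → ∀ (x : ℕ → X) (a b : ℕ → ℕ),
    (∀ i, i < k → a i ≤ b i) →
    (∀ i, i + 1 < k → b i < a (i + 1) ∧ M < a (i + 1) - b i) →
    ∀ p : ℕ, M + b (k - 1) - a 0 < p →
      ∃ z : X, (∀ m : ℕ, nIter f (p * m) z = z) ∧
        ∀ i, i < k → ∀ j, a i ≤ j → j ≤ b i →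
          dist (nIter f j z) (nIter f j (x i)) < ε

/-- Weak specification property for a non-autonomous system. -/
def WSP {X : Type*} [MetricSpace X] (f : ℕ → X → X) : Prop :=
  ∀ ε : ℝ, ε > 0 → ∃ N : ℕ, ∀ s : ℕ, 1 ≤ s → ∀ (x : ℕ → X) (a b : ℕ → ℕ),
    (∀ i, i < s → a i ≤ b i) →
    (∀ i, i + 1 < s → b i < a (i + 1) ∧ N < a (i + 1) - b i) →
      ∃ z : X, ∀ i, i < s → ∀ j, a i ≤ j → j ≤ b i →
        dist (nIter f j z) (nIter f j (x i)) < ε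

/-- Quasi-weak specification property for a non-autonomous system. -/
def QSP {X : Type*} [MetricSpace X] (f : ℕ → X → X) : Prop :=
  ∀ ε : ℝ, ε > 0 → ∃ M : ℕ, ∀ x₁ x₂ : X, ∀ n : ℕ, M ≤ n →
    ∃ z : X, dist z x₁ < ε ∧ dist (nIter f n z) (nIter f n x₂) < ε

/-- Topological mixing for a non-autonomous system. -/
def TopMixing {X : Type*} [TopologicalSpace X] (f : ℕ → X → X) : Prop :=
  ∀ U V : Set X, IsOpen U → IsOpen V → U.Nonempty → V.Nonempty →
    ∃ N : ℕ, ∀ n : ℕ, N ≤ n → (nIter f n '' U ∩ V).Nonempty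

/-- Topological transitivity for a non-autonomous system. -/
def TopTransitive {X : Type*} [TopologicalSpace X] (f : ℕ → X → X) : Prop :=
  ∀ U V : Set X, IsOpen U → IsOpen V → U.Nonempty → V.Nonempty →
    ∃ n : ℕ, 1 ≤ n ∧ (nIter f n '' U ∩ V).Nonempty

/-- Sensitive dependence on initial conditions for a non-autonomous system. -/
def Sensitive {X : Type*} [MetricSpace X] (f : ℕ → X → X) : Prop :=
  ∃ δ : ℝ, δ > 0 ∧ ∀ x : X, ∀ U : Set X, IsOpen U → x ∈ U →
    ∃ y ∈ U, ∃ n : ℕ, 1 ≤ n ∧ δ < dist (nIter f n x) (nIter f n y)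

/-!
Measures with finite support are Lévy–Prokhorov dense, so to get from a neighbourhood of `μ` to
one of `ν`, quantize both onto a finite set of points. For large `n`, base mixing gives for each
pair `(s, t)` of these points a point near `s` whose `n`-th image is near `t`; moving the
`μ ⊗ ν`-mass of the cells of `(s, t)` to that point yields a measure near `μ` whose `n`-th image
is near `ν`. Conversely, a measure close to `δ_u` whose `n`-th image is close to `δ_v` gives more
than half of its mass both to `U` and to `(f_1^n)⁻¹ V`, so these sets meet.
-/

open scoped ENNReal
open Filter

section Iterates

variable {X : Type*} [MeasurableSpace X] {f : ℕ → X → X}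

lemma measurable_nIter (hf : ∀ n, Measurable (f n)) (n : ℕ) : Measurable (nIter f n) := by
  induction n with
  | zero => exact measurable_id
  | succ n ih => exact (hf n).comp ih

noncomputable def inducedSystem (hf : ∀ n, Measurable (f n)) :
    ℕ → ProbabilityMeasure X → ProbabilityMeasure X :=
  fun n μ => μ.map (hf n).aemeasurable

lemma toMeasure_nIter_inducedSystem (hf : ∀ n, Measurable (f n)) (n : ℕ)
    (μ : ProbabilityMeasure X) :
    (nIter (inducedSystem hf) n μ).toMeasure = μ.toMeasure.map (nIter f n) := by
  induction n with
  | zero => exact Measure.map_id.symm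
  | succ n ih =>
    rw [nIter, Function.comp_apply, inducedSystem, ProbabilityMeasure.toMeasure_map, ih,
      Measure.map_map (hf n) (measurable_nIter hf n)]
    rfl

end Iterates

section LevyProkhorov

variable {X : Type*} [PseudoMetricSpace X] [MeasurableSpace X] [OpensMeasurableSpace X]

lemma levyProkhorovEDist_map_le_of_dist_le {Ω : Type*} [MeasurableSpace Ω] (m : Measure Ω)
    {g h : Ω → X} (hg : Measurable g) (hh : Measurable h) {r : ℝ}
    (hgh : ∀ ω, dist (g ω) (h ω) ≤ r) :
    levyProkhorovEDist (m.map g) (m.map h) ≤ ENNReal.ofReal r := by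
  have transport : ∀ {g h : Ω → X}, Measurable g → Measurable h →
      (∀ ω, dist (g ω) (h ω) ≤ r) → ∀ {ε : ℝ≥0∞} {B : Set X}, ENNReal.ofReal r < ε → ε < ∞ →
      MeasurableSet B → m.map g B ≤ m.map h (Metric.thickening ε.toReal B) + ε := by
    intro g h hg hh hgh ε B hε hε_top hB
    have hr : r < ε.toReal :=
      (le_max_left r 0).trans_lt (ENNReal.toReal_strict_mono hε_top.ne hε)
    rw [Measure.map_apply hg hB, Measure.map_apply hh Metric.isOpen_thickening.measurableSet]
    refine le_add_right (measure_mono fun ω hω => ?_)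
    exact Metric.mem_thickening_iff.2 ⟨g ω, hω, by rw [dist_comm]; exact (hgh ω).trans_lt hr⟩
  refine levyProkhorovEDist_le_of_forall _ _ _ fun ε B hε hε_top hB => ⟨?_, ?_⟩
  · exact transport hg hh hgh hε hε_top hB
  · exact transport hh hg (fun ω => dist_comm (g ω) (h ω) ▸ hgh ω) hε hε_top hB

end LevyProkhorov

lemma one_le_measure_ball_add_of_levyProkhorovEDist_dirac_lt {X : Type*} [MetricSpace X]
    [MeasurableSpace X] [OpensMeasurableSpace X] {μ : Measure X} {x : X} {r : ℝ} (hr : 0 ≤ r)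
    (h : levyProkhorovEDist μ (Measure.dirac x) < ENNReal.ofReal r) :
    1 ≤ μ (Metric.ball x r) + ENNReal.ofReal r := by
  have := right_measure_le_of_levyProkhorovEDist_lt h (measurableSet_singleton x)
  rwa [ENNReal.toReal_ofReal hr, Measure.dirac_apply_of_mem (Set.mem_singleton x),
    Metric.thickening_singleton] at this

section Nhds

variable {X : Type*} [PseudoMetricSpace X] [MeasurableSpace X] [OpensMeasurableSpace X]
  [SeparableSpace X]

lemma ProbabilityMeasure.isOpen_setOf_levyProkhorovEDist_lt (μ : ProbabilityMeasure X)
    (c : ℝ≥0∞) :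
    IsOpen {ν : ProbabilityMeasure X | levyProkhorovEDist ν.toMeasure μ.toMeasure < c} :=
  (Metric.isOpen_eball (x := LevyProkhorov.probabilityMeasureHomeomorph μ) (ε := c)).preimage
    LevyProkhorov.probabilityMeasureHomeomorph.continuous

lemma ProbabilityMeasure.exists_levyProkhorovEDist_lt_subset {U : Set (ProbabilityMeasure X)}
    (hU : IsOpen U) {μ : ProbabilityMeasure X} (hμ : μ ∈ U) :
    ∃ c > 0, ∀ ν : ProbabilityMeasure X,
      levyProkhorovEDist ν.toMeasure μ.toMeasure < c → ν ∈ U := by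
  have hU' := hU.preimage LevyProkhorov.probabilityMeasureHomeomorph.symm.continuous
  obtain ⟨c, hc, hball⟩ := EMetric.isOpen_iff.1 hU' _ hμ
  exact ⟨c, hc, fun ν hν => hball hν⟩

end Nhds

lemma exists_simpleFunc_dist_lt {X : Type*} [PseudoMetricSpace X] [CompactSpace X] [Nonempty X]
    [MeasurableSpace X] [OpensMeasurableSpace X] {r : ℝ} (hr : 0 < r) :
    ∃ g : SimpleFunc X X, ∀ x, dist (g x) x < r := by
  obtain ⟨t, ht⟩ := isCompact_univ.elim_finite_subcover (fun k => Metric.ball (denseSeq X k) r)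
    (fun _ => Metric.isOpen_ball) fun x _ => Set.mem_iUnion.2 <|
      (denseRange_denseSeq X).exists_dist_lt x hr
  refine ⟨SimpleFunc.nearestPt (denseSeq X) (t.sup id), fun x => ?_⟩
  obtain ⟨k, hk, hxk⟩ := Set.mem_iUnion₂.1 (ht (Set.mem_univ x))
  rw [← edist_lt_ofReal]
  exact (SimpleFunc.edist_nearestPt_le _ x (Finset.le_sup (f := id) hk)).trans_lt
    (edist_lt_ofReal.2 (Metric.mem_ball'.1 hxk))

lemma TopMixing.eventually_exists_near {X : Type*} [PseudoMetricSpace X] [Nonempty X]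
    {f : ℕ → X → X} (hmix : TopMixing f) (S : Finset X) {r : ℝ} (hr : 0 < r) :
    ∀ᶠ n in atTop, ∃ z : X → X → X, ∀ s ∈ S, ∀ t ∈ S,
      dist (z s t) s < r ∧ dist (nIter f n (z s t)) t < r := by
  have hpair : ∀ s t : X, ∀ᶠ n in atTop, ∃ z, dist z s < r ∧ dist (nIter f n z) t < r := by
    intro s t
    obtain ⟨N, hN⟩ := hmix _ _ Metric.isOpen_ball Metric.isOpen_ball
      ⟨s, Metric.mem_ball_self hr⟩ ⟨t, Metric.mem_ball_self hr⟩
    filter_upwards [eventually_ge_atTop N] with n hn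
    obtain ⟨-, ⟨z, hz, rfl⟩, hzt⟩ := hN n hn
    exact ⟨z, hz, hzt⟩
  filter_upwards [(eventually_all_finset S).2 fun s _ => (eventually_all_finset S).2
    fun t _ => hpair s t] with n hn
  choose! z hz using hn
  exact ⟨z, hz⟩

lemma ENNReal.one_lt_add_of_one_le_add_of_one_le_add {a b c : ℝ≥0∞} (ha : 1 ≤ a + c)
    (hb : 1 ≤ b + c) (hc : c < 2⁻¹) : 1 < a + b := by
  by_contra! hab
  have hcc : c + c < 1 := ENNReal.inv_two_add_inv_two ▸ ENNReal.add_lt_add hc hc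
  have : (1 : ℝ≥0∞) + 1 < 1 + 1 := calc
    (1 : ℝ≥0∞) + 1 ≤ (a + c) + (b + c) := add_le_add ha hb
    _ = (a + b) + (c + c) := by ring
    _ ≤ 1 + (c + c) := add_le_add_left hab _
    _ < 1 + 1 := ENNReal.add_lt_add_left ENNReal.one_ne_top hcc
  exact this.false

section Mixing

variable {X : Type*} [PseudoMetricSpace X] [MeasurableSpace X] [OpensMeasurableSpace X]
  {f : ℕ → X → X}

theorem TopMixing.topMixing_inducedSystem [CompactSpace X] (hf : ∀ n, Measurable (f n))
    (hmix : TopMixing f) : TopMixing (inducedSystem hf) := by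
  rintro U V hU hV ⟨μ, hμ⟩ ⟨ν, hν⟩
  obtain ⟨a, ha, hUa⟩ := ProbabilityMeasure.exists_levyProkhorovEDist_lt_subset hU hμ
  obtain ⟨b, hb, hVb⟩ := ProbabilityMeasure.exists_levyProkhorovEDist_lt_subset hV hν
  obtain ⟨r, -, hr_pos, hrab⟩ := ENNReal.lt_iff_exists_real_btwn.1 (lt_min ha hb)
  have hr : 0 < r := ENNReal.ofReal_pos.1 hr_pos
  have := μ.nonempty
  obtain ⟨g, hg⟩ := exists_simpleFunc_dist_lt (X := X) (half_pos hr)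
  obtain ⟨N, hN⟩ := eventually_atTop.1 (hmix.eventually_exists_near g.range (half_pos hr))
  refine ⟨N, fun n hn => ?_⟩
  obtain ⟨z, hz⟩ := hN n hn
  set φ : X × X → X := fun p => z (g p.1) (g p.2)
  have hφ : Measurable φ := (((g.comp Prod.fst measurable_fst).pair
    (g.comp Prod.snd measurable_snd)).map (Function.uncurry z)).measurable
  set P : ProbabilityMeasure X := (μ.prod ν).map hφ.aemeasurable
  have hφ_near (p : X × X) : dist (z (g p.1) (g p.2)) (g p.1) < r / 2 ∧
      dist (nIter f n (z (g p.1) (g p.2))) (g p.2) < r / 2 :=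
    hz _ (g.mem_range_self p.1) _ (g.mem_range_self p.2)
  have hPμ : levyProkhorovEDist P.toMeasure μ.toMeasure ≤ ENNReal.ofReal r := by
    have hμ_eq : μ.toMeasure = (μ.toMeasure.prod ν.toMeasure).map Prod.fst := by simp
    rw [ProbabilityMeasure.toMeasure_map, ProbabilityMeasure.toMeasure_prod]
    conv_lhs => arg 2; rw [hμ_eq]
    refine levyProkhorovEDist_map_le_of_dist_le _ hφ measurable_fst fun p => ?_
    linarith [dist_triangle (φ p) (g p.1) p.1, hφ_near p, hg p.1]
  have hPν : levyProkhorovEDist (nIter (inducedSystem hf) n P).toMeasure ν.toMeasure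
      ≤ ENNReal.ofReal r := by
    have hν_eq : ν.toMeasure = (μ.toMeasure.prod ν.toMeasure).map Prod.snd := by simp
    rw [toMeasure_nIter_inducedSystem, ProbabilityMeasure.toMeasure_map,
      ProbabilityMeasure.toMeasure_prod, Measure.map_map (measurable_nIter hf n) hφ]
    conv_lhs => arg 2; rw [hν_eq]
    refine levyProkhorovEDist_map_le_of_dist_le _ ((measurable_nIter hf n).comp hφ)
      measurable_snd fun p => show dist (nIter f n (φ p)) p.2 ≤ r from ?_
    linarith [dist_triangle (nIter f n (φ p)) (g p.2) p.2, hφ_near p, hg p.2]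
  exact ⟨_, ⟨P, hUa P (hPμ.trans_lt (hrab.trans_le (min_le_left a b))), rfl⟩,
    hVb _ (hPν.trans_lt (hrab.trans_le (min_le_right a b)))⟩

end Mixing

theorem TopMixing.of_topMixing_inducedSystem {X : Type*} [MetricSpace X] [SeparableSpace X]
    [MeasurableSpace X] [OpensMeasurableSpace X] {f : ℕ → X → X} (hf : ∀ n, Measurable (f n))
    (hmix : TopMixing (inducedSystem hf)) : TopMixing f := by
  rintro U V hU hV ⟨u, hu⟩ ⟨v, hv⟩
  obtain ⟨rU, hrU, hUr⟩ := Metric.isOpen_iff.1 hU u hu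
  obtain ⟨rV, hrV, hVr⟩ := Metric.isOpen_iff.1 hV v hv
  set r := min (min rU rV) 4⁻¹
  have hr : 0 < r := lt_min (lt_min hrU hrV) (by norm_num)
  have hrU' : r ≤ rU := (min_le_left _ _).trans (min_le_left _ _)
  have hrV' : r ≤ rV := (min_le_left _ _).trans (min_le_right _ _)
  have hr_half : ENNReal.ofReal r < 2⁻¹ := by
    rw [ENNReal.ofReal_lt_iff_lt_toReal hr.le (by simp)]
    have hr4 : r ≤ 4⁻¹ := min_le_right _ _
    norm_num
    linarith
  let δ (x : X) : ProbabilityMeasure X := ⟨Measure.dirac x, inferInstance⟩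
  have hδ (x : X) : levyProkhorovEDist (δ x).toMeasure (δ x).toMeasure < ENNReal.ofReal r := by
    simpa [levyProkhorovEDist_self] using hr
  obtain ⟨N, hN⟩ := hmix {ρ | levyProkhorovEDist ρ.toMeasure (δ u).toMeasure < ENNReal.ofReal r}
    {ρ | levyProkhorovEDist ρ.toMeasure (δ v).toMeasure < ENNReal.ofReal r}
    (ProbabilityMeasure.isOpen_setOf_levyProkhorovEDist_lt _ _)
    (ProbabilityMeasure.isOpen_setOf_levyProkhorovEDist_lt _ _) ⟨δ u, hδ u⟩ ⟨δ v, hδ v⟩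
  refine ⟨N, fun n hn => ?_⟩
  obtain ⟨-, ⟨ρ, hρ, rfl⟩, hρn⟩ := hN n hn
  have hρU : 1 ≤ ρ.toMeasure U + ENNReal.ofReal r :=
    (one_le_measure_ball_add_of_levyProkhorovEDist_dirac_lt hr.le hρ).trans <|
      add_le_add (measure_mono <| (Metric.ball_subset_ball hrU').trans hUr) le_rfl
  have hρV : 1 ≤ ρ.toMeasure (nIter f n ⁻¹' V) + ENNReal.ofReal r := by
    have := one_le_measure_ball_add_of_levyProkhorovEDist_dirac_lt hr.le hρn
    rw [toMeasure_nIter_inducedSystem, Measure.map_apply (measurable_nIter hf n)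
      measurableSet_ball] at this
    exact this.trans <| add_le_add (measure_mono <| Set.preimage_mono <|
      (Metric.ball_subset_ball hrV').trans hVr) le_rfl
  obtain ⟨x, hxU, hxV⟩ := nonempty_inter_of_measure_lt_add ρ.toMeasure
    (measurable_nIter hf n hV.measurableSet) (Set.subset_univ U) (Set.subset_univ _) <| by
      rw [measure_univ]
      exact ENNReal.one_lt_add_of_one_le_add_of_one_le_add hρU hρV hr_half
  exact ⟨_, ⟨x, hxU, rfl⟩, hxV⟩

theorem stmt12_general {X : Type*} [MetricSpace X] [CompactSpace X] [MeasurableSpace X] [BorelSpace X]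
    (f : ℕ → X → X) (hc : ∀ n, Continuous (f n)) :
    TopMixing f ↔
    TopMixing (fun n (μ : ProbabilityMeasure X) =>
      μ.map (hc n).measurable.aemeasurable) :=
  ⟨fun hmix => hmix.topMixing_inducedSystem fun n => (hc n).measurable,
    TopMixing.of_topMixing_inducedSystem fun n => (hc n).measurable⟩

theorem stmt12 {X : Type*} [MetricSpace X] [CompactSpace X] [MeasurableSpace X] [BorelSpace X]
    (f : ℕ → X → X) (hc : ∀ n, Continuous (f n)) (hs : ∀ n, Function.Surjective (f n)) :
    TopMixing f ↔
    TopMixing (fun n (μ : ProbabilityMeasure X) =>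
      μ.map (hc n).measurable.aemeasurable) :=
  stmt12_general f hc
end

section
/- A k-periodic non-autonomous system (X, f_{1,∞}) on a compact metric space has the quasi-weak specification property if and only if the autonomous system (X, g), g = f_k ∘ ⋯ ∘ f_1, has the quasi-weak specification property. -/
open Metric TopologicalSpace MeasureTheory

/-
Write `f₁ⁿ` for `nIter f n`. By periodicity `f₁^{r + qk} = f₁^r ∘ g^q`. Specification for `f` at
times `qk` is specification for `g` at time `q`. Conversely, to shadow `x₂` at time `n = qk + r`
with `r < k`, shadow it for `g` at time `q` with a precision `δ` for which the finitely many maps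
`f₁^r`, `r < k`, are `(δ, ε)`-uniformly continuous on the compact space.
-/

section

variable {X : Type*}

lemma nIter_const (g : X → X) : ∀ n, nIter (fun _ => g) n = g^[n]
  | 0 => rfl
  | n + 1 => by rw [Function.iterate_succ', ← nIter_const g n]; rfl

lemma continuous_nIter [TopologicalSpace X] {f : ℕ → X → X} (hc : ∀ n, Continuous (f n)) :
    ∀ n, Continuous (nIter f n)
  | 0 => continuous_id
  | n + 1 => (hc n).comp (continuous_nIter hc n)

lemma uniformEquicontinuous_nIter_fin [MetricSpace X] [CompactSpace X] {f : ℕ → X → X}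
    (hc : ∀ n, Continuous (f n)) (k : ℕ) :
    UniformEquicontinuous fun r : Fin k => nIter f r :=
  uniformEquicontinuous_finite.2 fun r =>
    CompactSpace.uniformContinuous_of_continuous (continuous_nIter hc r)

section Periodic

variable {f : ℕ → X → X} {k : ℕ}

lemma nIter_add_period (hper : ∀ n x, f (n + k) x = f n x) :
    ∀ m, nIter f (m + k) = nIter f m ∘ nIter f k
  | 0 => by rw [zero_add]; rfl
  | m + 1 => by
    rw [Nat.add_right_comm, nIter, nIter_add_period hper m, funext (hper m)]
    rfl

lemma nIter_add_mul_period (hper : ∀ n x, f (n + k) x = f n x) (r : ℕ) :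
    ∀ q, nIter f (r + q * k) = nIter f r ∘ (nIter f k)^[q]
  | 0 => by simp
  | q + 1 => by
    rw [Nat.succ_mul, ← add_assoc, nIter_add_period hper, nIter_add_mul_period hper r q,
      Function.iterate_succ]
    rfl

lemma nIter_mul_period (hper : ∀ n x, f (n + k) x = f n x) (q : ℕ) :
    nIter f (q * k) = (nIter f k)^[q] := by
  rw [← zero_add (q * k), nIter_add_mul_period hper]
  rfl

variable [MetricSpace X]

lemma QSP.const_nIter_period (hk : 1 ≤ k) (hper : ∀ n x, f (n + k) x = f n x) (h : QSP f) :
    QSP fun _ => nIter f k := by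
  intro ε hε
  obtain ⟨M, hM⟩ := h ε hε
  refine ⟨M, fun x₁ x₂ q hq => ?_⟩
  obtain ⟨z, hz₁, hz₂⟩ := hM x₁ x₂ (q * k) (hq.trans (Nat.le_mul_of_pos_right q hk))
  rw [nIter_mul_period hper] at hz₂
  exact ⟨z, hz₁, by rwa [nIter_const]⟩

lemma QSP.of_const_nIter_period [CompactSpace X] (hc : ∀ n, Continuous (f n)) (hk : 1 ≤ k)
    (hper : ∀ n x, f (n + k) x = f n x) (h : QSP fun _ => nIter f k) : QSP f := by
  intro ε hε
  obtain ⟨δ, hδ, hδε⟩ := uniformEquicontinuous_iff.1 (uniformEquicontinuous_nIter_fin hc k) ε hε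
  obtain ⟨M, hM⟩ := h (min δ ε) (lt_min hδ hε)
  refine ⟨k * (M + 1), fun x₁ x₂ n hn => ?_⟩
  have hq : M ≤ n / k := by
    have : M + 1 ≤ n / k := (Nat.le_div_iff_mul_le hk).2 (by rwa [Nat.mul_comm])
    omega
  obtain ⟨z, hz₁, hz₂⟩ := hM x₁ x₂ (n / k) hq
  rw [nIter_const] at hz₂
  refine ⟨z, hz₁.trans_le (min_le_right _ _), ?_⟩
  rw [← Nat.mod_add_div' n k, nIter_add_mul_period hper]
  exact hδε _ _ (hz₂.trans_le (min_le_left _ _)) ⟨n % k, Nat.mod_lt n hk⟩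

end Periodic

end

theorem stmt16_general {X : Type*} [MetricSpace X] [CompactSpace X]
    (f : ℕ → X → X) (hc : ∀ n, Continuous (f n))
    (k : ℕ) (hk : 1 ≤ k) (hper : ∀ n x, f (n + k) x = f n x) :
    QSP f ↔ QSP (fun _ => nIter f k) :=
  ⟨QSP.const_nIter_period hk hper, QSP.of_const_nIter_period hc hk hper⟩

theorem stmt16 {X : Type*} [MetricSpace X] [CompactSpace X]
    (f : ℕ → X → X) (hc : ∀ n, Continuous (f n)) (hs : ∀ n, Function.Surjective (f n))
    (k : ℕ) (hk : 1 ≤ k) (hper : ∀ n x, f (n + k) x = f n x) :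
    QSP f ↔ QSP (fun _ => nIter f k) :=
  stmt16_general f hc k hk hper
end

section
/- If a non-autonomous system (X, f_{1,∞}) on a compact metric space with at least two points is topologically mixing, then it has sensitive dependence on initial conditions; consequently, any system with the quasi-weak specification property (and surjective maps) is sensitive. -/
open Metric TopologicalSpace MeasureTheory

lemma nIter_surj {X : Type*} (f : ℕ → X → X) (hs : ∀ n, Function.Surjective (f n)) :
    ∀ n, Function.Surjective (nIter f n) := by
  intro n
  induction n with
  | zero => exact Function.surjective_id
  | succ n ih => exact (hs n).comp ih

lemma mix_sens {X : Type*} [MetricSpace X] (f : ℕ → X → X)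
    (hnt : ∃ x y : X, x ≠ y) (hmix : TopMixing f) : Sensitive f := by
  obtain ⟨p, q, hpq⟩ := hnt
  have hr : 0 < dist p q := dist_pos.2 hpq
  set r := dist p q with hrdef
  refine ⟨r / 4, by positivity, ?_⟩
  intro x U hU hxU
  obtain ⟨N1, h1⟩ := hmix U (ball p (r / 8)) hU isOpen_ball ⟨x, hxU⟩
    ⟨p, mem_ball_self (by positivity)⟩
  obtain ⟨N2, h2⟩ := hmix U (ball q (r / 8)) hU isOpen_ball ⟨x, hxU⟩
    ⟨q, mem_ball_self (by positivity)⟩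
  set n := max N1 N2 + 1 with hn
  obtain ⟨w1, ⟨y1, hy1U, hw1⟩, hw1b⟩ := h1 n (le_trans (le_max_left _ _) (Nat.le_succ _))
  obtain ⟨w2, ⟨y2, hy2U, hw2⟩, hw2b⟩ := h2 n (le_trans (le_max_right _ _) (Nat.le_succ _))
  rw [mem_ball] at hw1b hw2b
  have ht1 : dist p q ≤ dist p w1 + dist w1 w2 + dist w2 q := by
    calc dist p q ≤ dist p w1 + dist w1 q := dist_triangle _ _ _
    _ ≤ dist p w1 + (dist w1 w2 + dist w2 q) := by
        have := dist_triangle w1 w2 q; linarith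
    _ = _ := by ring
  have ht2 : dist w1 w2 ≤ dist w1 (nIter f n x) + dist (nIter f n x) w2 :=
    dist_triangle _ _ _
  have hpw1 : dist p w1 = dist w1 p := dist_comm _ _
  have hqw2 : dist w2 q = dist w2 q := rfl
  rcases le_or_gt (dist (nIter f n x) w1) (r / 4) with hle | hgt
  · refine ⟨y2, hy2U, n, Nat.le_add_left _ _, ?_⟩
    rw [hw2]
    have : dist w1 (nIter f n x) = dist (nIter f n x) w1 := dist_comm _ _
    linarith
  · refine ⟨y1, hy1U, n, Nat.le_add_left _ _, ?_⟩
    rw [hw1]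
    linarith

lemma qsp_mix {X : Type*} [MetricSpace X] (f : ℕ → X → X)
    (hs : ∀ n, Function.Surjective (f n)) (hq : QSP f) : TopMixing f := by
  intro U V hU hV ⟨u, huU⟩ ⟨v, hvV⟩
  obtain ⟨ε1, hε1, hb1⟩ := Metric.isOpen_iff.1 hU u huU
  obtain ⟨ε2, hε2, hb2⟩ := Metric.isOpen_iff.1 hV v hvV
  obtain ⟨M, hM⟩ := hq (min ε1 ε2) (lt_min hε1 hε2)
  refine ⟨M, fun n hn => ?_⟩
  obtain ⟨x2, hx2⟩ := nIter_surj f hs n v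
  obtain ⟨z, hz1, hz2⟩ := hM u x2 n hn
  refine ⟨nIter f n z, ⟨z, hb1 ?_, rfl⟩, hb2 ?_⟩
  · exact mem_ball.2 (lt_of_lt_of_le hz1 (min_le_left _ _))
  · rw [hx2] at hz2
    exact mem_ball.2 (lt_of_lt_of_le hz2 (min_le_right _ _))

theorem stmt17 {X : Type*} [MetricSpace X] [CompactSpace X]
    (f : ℕ → X → X) (hc : ∀ n, Continuous (f n)) (hs : ∀ n, Function.Surjective (f n))
    (hnt : ∃ x y : X, x ≠ y) :
    (TopMixing f → Sensitive f) ∧ (QSP f → Sensitive f) :=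
  ⟨mix_sens f hnt, fun hq => mix_sens f hnt (qsp_mix f hs hq)⟩
end
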